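/- Let n be a nonnegative integer and λ = −n(n+2). (a) If F is a nonzero ℂ^{ℓ+1}-valued polynomial of degree w satisfying s(1−s)F″(s) + (B − s·C)F′(s) + (Λ₀ − λ)F(s) = 0 for all s ∈ ℝ, then n−ℓ ≤ w ≤ n and the leading coefficient of F is a nonzero scalar multiple of the standard basis vector e_{n−w} of ℂ^{ℓ+1} (basis vectors indexed 0,…,ℓ). (b) Conversely, for every integer w with max(0, n−ℓ) ≤ w ≤ n there exists a polynomial solution of this equation of degree exactly w. -/
import Mathlib


namespace Stmt9

/-- `B = Σ_j (j+3/2) E_{jj} - Σ_{j=0}^{ℓ-1} (j+1) E_{j,j+1}`. -/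
noncomputable def Bmat (ℓ : ℕ) : Matrix (Fin (ℓ+1)) (Fin (ℓ+1)) ℂ :=
  Matrix.of fun j k =>
    if j = k then ((j:ℕ):ℂ) + 3/2
    else if (j:ℕ) + 1 = (k:ℕ) then -(((j:ℕ):ℂ) + 1)
    else 0

/-- `C = Σ_j (2j+3) E_{jj}`. -/
noncomputable def Cmat (ℓ : ℕ) : Matrix (Fin (ℓ+1)) (Fin (ℓ+1)) ℂ :=
  Matrix.diagonal fun j => 2*((j:ℕ):ℂ) + 3

/-- `Λ₀ = -Σ_j j(j+2) E_{jj}`. -/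
noncomputable def Lam0 (ℓ : ℕ) : Matrix (Fin (ℓ+1)) (Fin (ℓ+1)) ℂ :=
  Matrix.diagonal fun j => -(((j:ℕ):ℂ) * (((j:ℕ):ℂ) + 2))

/-- The `ℂ^{ℓ+1}`-valued function determined by a vector of polynomials. -/
def polyFun (ℓ : ℕ) (q : Fin (ℓ+1) → Polynomial ℂ) : ℝ → Fin (ℓ+1) → ℂ :=
  fun s j => (q j).eval (s:ℂ)

/-- The matrix hypergeometric equation
`s(1-s)F'' + (B - sC)F' + (Λ₀ - λ)F = 0` for all real `s`. -/
def SatisfiesODE (ℓ : ℕ) (lam : ℂ) (q : Fin (ℓ+1) → Polynomial ℂ) : Prop :=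
  ∀ s : ℝ,
    ((s:ℂ) * (1 - (s:ℂ))) • deriv (deriv (polyFun ℓ q)) s
      + (Bmat ℓ - (s:ℂ) • Cmat ℓ).mulVec (deriv (polyFun ℓ q) s)
      + (Lam0 ℓ - lam • (1 : Matrix (Fin (ℓ+1)) (Fin (ℓ+1)) ℂ)).mulVec (polyFun ℓ q s) = 0

open Polynomial

noncomputable def Qnext (ℓ : ℕ) (q : Fin (ℓ+1) → Polynomial ℂ) (j : Fin (ℓ+1)) : Polynomial ℂ :=
  if h : (j:ℕ)+1 < ℓ+1 then q ⟨(j:ℕ)+1, h⟩ else 0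

noncomputable def odePoly (ℓ : ℕ) (lam : ℂ) (q : Fin (ℓ+1) → Polynomial ℂ) (j : Fin (ℓ+1)) :
    Polynomial ℂ :=
  X * (1 - X) * derivative (derivative (q j))
  + C (((j:ℕ):ℂ) + 3/2) * derivative (q j)
  - C (((j:ℕ):ℂ) + 1) * derivative (Qnext ℓ q j)
  - C (2*((j:ℕ):ℂ) + 3) * (X * derivative (q j))
  + C (-(((j:ℕ):ℂ) * (((j:ℕ):ℂ) + 2)) - lam) * (q j)

lemma deriv_polyFun (ℓ : ℕ) (q : Fin (ℓ+1) → Polynomial ℂ) :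
    deriv (polyFun ℓ q) = polyFun ℓ (fun j => derivative (q j)) := by
  funext s
  exact (hasDerivAt_pi.2 fun j => ((q j).hasDerivAt (s:ℂ)).comp_ofReal).deriv

lemma Bmat_mulVec (ℓ : ℕ) (v : Fin (ℓ+1) → ℂ) (j : Fin (ℓ+1)) :
    (Bmat ℓ).mulVec v j
      = (((j:ℕ):ℂ) + 3/2) * v j
        - (((j:ℕ):ℂ) + 1) * (if h : (j:ℕ)+1 < ℓ+1 then v ⟨(j:ℕ)+1, h⟩ else 0) := by
  show ∑ k, Bmat ℓ j k * v k = _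
  by_cases h : (j:ℕ)+1 < ℓ+1
  · rw [dif_pos h]
    have hrw : ∀ k : Fin (ℓ+1), Bmat ℓ j k * v k =
        (if k = j then (((j:ℕ):ℂ) + 3/2) * v j else 0)
        + (if k = (⟨(j:ℕ)+1, h⟩ : Fin (ℓ+1)) then -(((j:ℕ):ℂ) + 1) * v ⟨(j:ℕ)+1, h⟩ else 0) := by
      intro k
      simp only [Bmat, Matrix.of_apply]
      rcases eq_or_ne k j with rfl | hkj
      · have h2 : ¬ (k = (⟨(k:ℕ)+1, h⟩ : Fin (ℓ+1))) := by
          simp only [Fin.ext_iff]; omega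
        have h3 : ¬ ((k:ℕ) + 1 = (k:ℕ)) := by omega
        rw [if_pos rfl, if_pos rfl, if_neg h2, add_zero]
      · have h1 : ¬ (j = k) := fun e => hkj e.symm
        rw [if_neg h1, if_neg hkj, zero_add]
        by_cases h2 : (j:ℕ)+1 = (k:ℕ)
        · have hk : k = (⟨(j:ℕ)+1, h⟩ : Fin (ℓ+1)) := by
            simp only [Fin.ext_iff]; omega
          rw [if_pos h2, if_pos hk, hk]
        · have hk : ¬ (k = (⟨(j:ℕ)+1, h⟩ : Fin (ℓ+1))) := by
            simp only [Fin.ext_iff]; omega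
          rw [if_neg h2, if_neg hk, zero_mul]
    rw [Finset.sum_congr rfl (fun k _ => hrw k), Finset.sum_add_distrib,
      Finset.sum_ite_eq' Finset.univ, Finset.sum_ite_eq' Finset.univ]
    simp; ring
  · rw [dif_neg h]
    have hrw : ∀ k : Fin (ℓ+1), Bmat ℓ j k * v k =
        (if k = j then (((j:ℕ):ℂ) + 3/2) * v j else 0) := by
      intro k
      simp only [Bmat, Matrix.of_apply]
      rcases eq_or_ne k j with rfl | hkj
      · rw [if_pos rfl, if_pos rfl]
      · have h1 : ¬ (j = k) := fun e => hkj e.symm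
        have h2 : ¬ ((j:ℕ)+1 = (k:ℕ)) := by omega
        rw [if_neg h1, if_neg h2, if_neg hkj, zero_mul]
    rw [Finset.sum_congr rfl (fun k _ => hrw k), Finset.sum_ite_eq' Finset.univ]
    simp

lemma ode_component (ℓ : ℕ) (lam : ℂ) (q : Fin (ℓ+1) → Polynomial ℂ) (s : ℝ) (j : Fin (ℓ+1)) :
    (((s:ℂ) * (1 - (s:ℂ))) • deriv (deriv (polyFun ℓ q)) s
      + (Bmat ℓ - (s:ℂ) • Cmat ℓ).mulVec (deriv (polyFun ℓ q) s)
      + (Lam0 ℓ - lam • (1 : Matrix (Fin (ℓ+1)) (Fin (ℓ+1)) ℂ)).mulVec (polyFun ℓ q s)) j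
      = (odePoly ℓ lam q j).eval (s:ℂ) := by
  rw [deriv_polyFun, deriv_polyFun]
  simp only [Pi.add_apply, Pi.smul_apply, smul_eq_mul, Matrix.sub_mulVec,
    Matrix.smul_mulVec, Matrix.one_mulVec, Pi.sub_apply, Bmat_mulVec,
    Lam0, Cmat, Matrix.mulVec_diagonal, polyFun, odePoly, Qnext]
  split_ifs with h
  · simp only [eval_add, eval_sub, eval_mul, eval_C, eval_X, eval_one]
    ring
  · simp only [derivative_zero, eval_add, eval_sub, eval_mul, eval_C, eval_X, eval_one, eval_zero]
    ring

lemma satisfies_iff (ℓ : ℕ) (lam : ℂ) (q : Fin (ℓ+1) → Polynomial ℂ) :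
    SatisfiesODE ℓ lam q ↔ ∀ j, odePoly ℓ lam q j = 0 := by
  constructor
  · intro hq j
    apply Polynomial.eq_zero_of_infinite_isRoot
    apply Set.Infinite.mono (s := Set.range (fun s : ℝ => (s:ℂ)))
    · rintro _ ⟨s, rfl⟩
      show IsRoot _ _
      rw [IsRoot, ← ode_component ℓ lam q s j, hq s]
      rfl
    · exact Set.infinite_range_of_injective Complex.ofReal_injective
  · intro h0 s
    funext j
    rw [show ((0 : Fin (ℓ+1) → ℂ) j) = 0 from rfl]
    rw [ode_component ℓ lam q s j, h0 j, eval_zero]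


lemma coeff_X_one_sub_X_mul (p : Polynomial ℂ) (m : ℕ) :
    (X * (1 - X) * derivative (derivative p)).coeff m
      = ((m:ℂ)+1)*(m:ℂ) * p.coeff (m+1) - (m:ℂ)*((m:ℂ)-1) * p.coeff m := by
  have h : X * (1 - X) * derivative (derivative p)
      = X * (derivative (derivative p)) - X * (X * derivative (derivative p)) := by ring
  rw [h, coeff_sub]
  match m with
  | 0 => simp
  | 1 =>
    rw [coeff_X_mul, coeff_X_mul, mul_coeff_zero, coeff_X_zero, coeff_derivative,
      coeff_derivative]
    push_cast; ring
  | (k+2) =>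
    rw [coeff_X_mul, coeff_X_mul, coeff_X_mul, coeff_derivative, coeff_derivative,
      coeff_derivative, coeff_derivative]
    push_cast; ring

lemma coeff_X_mul_deriv (p : Polynomial ℂ) (m : ℕ) :
    (X * derivative p).coeff m = (m:ℂ) * p.coeff m := by
  match m with
  | 0 => simp
  | (k+1) => rw [coeff_X_mul, coeff_derivative]; push_cast; ring

lemma odePoly_coeff (ℓ n : ℕ) (q : Fin (ℓ+1) → Polynomial ℂ) (j : Fin (ℓ+1)) (m : ℕ) :
    (odePoly ℓ (-(n:ℂ) * ((n:ℂ) + 2)) q j).coeff m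
      = ((m:ℂ)+1) * (((m:ℂ)+((j:ℕ):ℂ)+3/2) * (q j).coeff (m+1)
            - (((j:ℕ):ℂ)+1) * (Qnext ℓ q j).coeff (m+1))
        + ((n:ℂ)*((n:ℂ)+2) - ((m:ℂ)+((j:ℕ):ℂ))*((m:ℂ)+((j:ℕ):ℂ)+2)) * (q j).coeff m := by
  simp only [odePoly, coeff_add, coeff_sub, coeff_C_mul, coeff_X_one_sub_X_mul,
    coeff_derivative, coeff_X_mul_deriv]
  ring

lemma rec_of_ode (ℓ n : ℕ) (q : Fin (ℓ+1) → Polynomial ℂ)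
    (h : SatisfiesODE ℓ (-(n:ℂ) * ((n:ℂ) + 2)) q) (j : Fin (ℓ+1)) (m : ℕ) :
    ((m:ℂ)+1) * (((m:ℂ)+((j:ℕ):ℂ)+3/2) * (q j).coeff (m+1)
        - (((j:ℕ):ℂ)+1) * (Qnext ℓ q j).coeff (m+1))
      + ((n:ℂ)*((n:ℂ)+2) - ((m:ℂ)+((j:ℕ):ℂ))*((m:ℂ)+((j:ℕ):ℂ)+2)) * (q j).coeff m = 0 := by
  rw [← odePoly_coeff, (satisfies_iff ℓ _ q).1 h j, coeff_zero]

lemma nat_eq_of_mul_eq {x y : ℕ} (h : (x:ℂ)*((x:ℂ)+2) = (y:ℂ)*((y:ℂ)+2)) : x = y := by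
  have h2 : ((x:ℂ) - (y:ℂ)) * ((x:ℂ) + (y:ℂ) + 2) = 0 := by linear_combination h
  rcases mul_eq_zero.1 h2 with h3 | h3
  · have : (x:ℂ) = (y:ℂ) := sub_eq_zero.1 h3
    exact_mod_cast this
  · exfalso
    have hc : ((x + y + 2 : ℕ) : ℂ) = 0 := by push_cast; linear_combination h3
    rw [Nat.cast_eq_zero] at hc
    omega


lemma part_a (ℓ n w : ℕ) (q : Fin (ℓ+1) → Polynomial ℂ)
    (hode : SatisfiesODE ℓ (-(n:ℂ) * ((n:ℂ) + 2)) q)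
    (hdeg : ∀ j, (q j).natDegree ≤ w) (hne : ∃ j, (q j).coeff w ≠ 0) :
    (n:ℤ) - (ℓ:ℤ) ≤ (w:ℤ) ∧ w ≤ n ∧
    (∀ j : Fin (ℓ+1), (j:ℕ) ≠ n - w → (q j).coeff w = 0) ∧
    (∀ j : Fin (ℓ+1), (j:ℕ) = n - w → (q j).coeff w ≠ 0) := by
  have key : ∀ j : Fin (ℓ+1), (q j).coeff w ≠ 0 → n = w + (j:ℕ) := by
    intro j hj
    have h1 := rec_of_ode ℓ n q hode j w
    have ha : (q j).coeff (w+1) = 0 :=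
      Polynomial.coeff_eq_zero_of_natDegree_lt (Nat.lt_succ_of_le (hdeg j))
    have hb : (Qnext ℓ q j).coeff (w+1) = 0 := by
      unfold Qnext
      split
      · exact Polynomial.coeff_eq_zero_of_natDegree_lt (Nat.lt_succ_of_le (hdeg _))
      · exact Polynomial.coeff_zero _
    rw [ha, hb] at h1
    have h2 : ((n:ℂ)*((n:ℂ)+2) - ((w:ℂ)+((j:ℕ):ℂ))*((w:ℂ)+((j:ℕ):ℂ)+2)) * (q j).coeff w = 0 := by
      linear_combination h1
    rcases mul_eq_zero.1 h2 with h3 | h3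
    · have h4 : ((n:ℕ):ℂ)*(((n:ℕ):ℂ)+2)
          = (((w+(j:ℕ)):ℕ):ℂ)*((((w+(j:ℕ)):ℕ):ℂ)+2) := by
        push_cast
        linear_combination h3
      exact nat_eq_of_mul_eq h4
    · exact absurd h3 hj
  obtain ⟨j0, hj0⟩ := hne
  have hn : n = w + (j0:ℕ) := key j0 hj0
  have hj0lt : (j0:ℕ) < ℓ+1 := j0.isLt
  refine ⟨by omega, by omega, ?_, ?_⟩
  · intro j hjne
    by_contra hc
    have := key j hc
    omega
  · intro j hj
    have hjj : j = j0 := by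
      apply Fin.ext
      omega
    rw [hjj]; exact hj0

noncomputable def coefAux (n w : ℕ) : ℕ → ℕ → ℂ
  | 0, j => if j = n - w then 1 else 0
  | (t+1), j =>
      -((((w - (t+1) : ℕ)):ℂ)+1) * (((((w - (t+1):ℕ)):ℂ)+(j:ℂ)+3/2) * coefAux n w t j
          - ((j:ℂ)+1) * coefAux n w t (j+1))
      / ((n:ℂ)*((n:ℂ)+2) - ((((w - (t+1):ℕ)):ℂ)+(j:ℂ))*((((w - (t+1):ℕ)):ℂ)+(j:ℂ)+2))

lemma coefAux_eq_zero (n w : ℕ) : ∀ t j, n - w < j → coefAux n w t j = 0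
  | 0, j, h => by
    simp only [coefAux]
    rw [if_neg (by omega)]
  | (t+1), j, h => by
    simp only [coefAux]
    rw [coefAux_eq_zero n w t j h, coefAux_eq_zero n w t (j+1) (by omega)]
    simp

noncomputable def solPoly (n w : ℕ) (j : ℕ) : Polynomial ℂ :=
  ∑ m ∈ Finset.range (w+1), Polynomial.C (coefAux n w (w - m) j) * X ^ m

lemma solPoly_coeff (n w j m : ℕ) :
    (solPoly n w j).coeff m = if m ≤ w then coefAux n w (w - m) j else 0 := by
  rw [solPoly, finset_sum_coeff]
  simp only [coeff_C_mul, coeff_X_pow, mul_ite, mul_one, mul_zero]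
  rw [Finset.sum_ite_eq (Finset.range (w+1)) m]
  simp [Nat.lt_succ_iff]

lemma solPoly_natDegree (n w j : ℕ) : (solPoly n w j).natDegree ≤ w := by
  apply Polynomial.natDegree_le_iff_coeff_eq_zero.2
  intro m hm
  rw [solPoly_coeff, if_neg (by omega)]

lemma part_b (ℓ n w : ℕ) (h1 : (n:ℤ) - (ℓ:ℤ) ≤ (w:ℤ)) (h2 : w ≤ n) :
    ∃ q : Fin (ℓ+1) → Polynomial ℂ,
      SatisfiesODE ℓ (-(n:ℂ) * ((n:ℂ) + 2)) q ∧
      (∀ j, (q j).natDegree ≤ w) ∧ (∃ j, (q j).coeff w ≠ 0) := by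
  have hnw : n - w ≤ ℓ := by omega
  refine ⟨fun j => solPoly n w (j:ℕ), ?_, fun j => solPoly_natDegree n w (j:ℕ), ?_⟩
  · rw [satisfies_iff]
    intro j
    apply Polynomial.ext
    intro m
    rw [coeff_zero, odePoly_coeff]
    have hQ : ∀ m' : ℕ, (Qnext ℓ (fun j : Fin (ℓ+1) => solPoly n w (j:ℕ)) j).coeff m'
        = if m' ≤ w then coefAux n w (w - m') ((j:ℕ)+1) else 0 := by
      intro m'
      unfold Qnext
      split
      · exact solPoly_coeff n w _ m'
      · rw [Polynomial.coeff_zero, coefAux_eq_zero n w _ _ (by omega)]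
        simp
    simp only [hQ, solPoly_coeff]
    rcases lt_trichotomy m w with hm | rfl | hm
    · rw [if_pos (by omega), if_pos (by omega), if_pos (by omega)]
      have ht : w - m = (w - (m+1)) + 1 := by omega
      rw [ht]
      simp only [coefAux]
      have hm2 : w - (w - (m+1) + 1) = m := by omega
      rw [hm2]
      by_cases hj : (j:ℕ) ≤ n - w
      · have hden : (n:ℂ)*((n:ℂ)+2) - ((m:ℂ)+((j:ℕ):ℂ))*((m:ℂ)+((j:ℕ):ℂ)+2) ≠ 0 := by
          intro hc
          have hcc : ((n:ℕ):ℂ)*(((n:ℕ):ℂ)+2)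
              = (((m+(j:ℕ)):ℕ):ℂ)*((((m+(j:ℕ)):ℕ):ℂ)+2) := by
            push_cast
            linear_combination hc
          have := nat_eq_of_mul_eq hcc
          omega
        field_simp
        ring
      · rw [coefAux_eq_zero n w (w - (m+1)) _ (by omega),
          coefAux_eq_zero n w (w - (m+1)) _ (by omega)]
        simp
    · rw [if_neg (by omega), if_neg (by omega), if_pos (le_refl m)]
      rw [show m - m = 0 from by omega]
      simp only [coefAux]
      by_cases hj : (j:ℕ) = n - m
      · rw [if_pos hj]
        have hwj : m + (j:ℕ) = n := by omega
        have hc : ((m:ℂ)+((j:ℕ):ℂ)) = (n:ℂ) := by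
          exact_mod_cast congrArg (Nat.cast : ℕ → ℂ) hwj
        rw [hc]
        ring
      · rw [if_neg hj]
        simp
    · rw [if_neg (by omega), if_neg (by omega), if_neg (by omega)]
      simp
  · refine ⟨⟨n - w, by omega⟩, ?_⟩
    rw [solPoly_coeff, if_pos (le_refl w), show w - w = 0 from by omega]
    simp only [coefAux]
    norm_num

/-- (a) Any nonzero polynomial solution of degree `w` of the hypergeometric equation
with `λ = -n(n+2)` satisfies `n-ℓ ≤ w ≤ n` and has leading coefficient a nonzero
multiple of the basis vector `e_{n-w}`; (b) conversely for each `w` with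
`max(0, n-ℓ) ≤ w ≤ n` there is a polynomial solution of degree exactly `w`. -/
theorem polynomial_solutions_degree (ℓ n : ℕ) :
    (∀ (w : ℕ) (q : Fin (ℓ+1) → Polynomial ℂ),
      SatisfiesODE ℓ (-(n:ℂ) * ((n:ℂ) + 2)) q →
      (∀ j, (q j).natDegree ≤ w) → (∃ j, (q j).coeff w ≠ 0) →
        (n:ℤ) - (ℓ:ℤ) ≤ (w:ℤ) ∧ w ≤ n ∧
        (∀ j : Fin (ℓ+1), (j:ℕ) ≠ n - w → (q j).coeff w = 0) ∧
        (∀ j : Fin (ℓ+1), (j:ℕ) = n - w → (q j).coeff w ≠ 0)) ∧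
    (∀ w : ℕ, (n:ℤ) - (ℓ:ℤ) ≤ (w:ℤ) → w ≤ n →
      ∃ q : Fin (ℓ+1) → Polynomial ℂ,
        SatisfiesODE ℓ (-(n:ℂ) * ((n:ℂ) + 2)) q ∧
        (∀ j, (q j).natDegree ≤ w) ∧ (∃ j, (q j).coeff w ≠ 0)) :=
  ⟨fun w q hode hdeg hne => part_a ℓ n w q hode hdeg hne,
   fun w h1 h2 => part_b ℓ n w h1 h2⟩

end Stmt9
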